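/- For all natural numbers m < n, the set {x₁, x₂, x₃, α_{2m}} is NOT a boundary of the good set S_{2n} = {y₁,…,y_{2n}}: there exists a function f on S_{2m+2} and prescribed values on {x₁,x₂,x₃,α_{2m}} for which equation (1) has no solution on S_{2m+2} extending those values. -/

import Mathlib

/-!
Take `f` to be the indicator of `y₁` and prescribe the value `0` on `{x₁, x₂, x₃, α_{2m}}`.
The equation at `y₁` forces `u 3 x₄ = 1`. Comparing the equations at the points
`y_{4t+3}, …, y_{4t+6}` shows that `aₜ = u 3 α_{4t+2}` satisfies `a₀ = 1/2`,
`aₜ₊₁ = 1/2 + aₜ/4` and `u 1 α_{4t+4} = -aₜ/2`, so none of these values vanish. But `α_{2m}`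
is `x₄` for `m = 0`, the last coordinate of `y_{2m+1}` for odd `m` and the second one of
`y_{2m-1}` for even `m > 0`, so the prescription forces one of them to vanish. A solution on
`S_{2n}` would restrict to one on `S_{2m+2}`.
-/

open scoped BigOperators

/-- Symbols: x₁,x₂,x₃,x₄ are 0,1,2,3 and αⱼ = j+3 (so all symbols are distinct naturals). -/
def α (j : ℕ) : ℕ := j + 3

/-- The points y₁, y₂, y₃, … of the paper's construction. -/
def y : ℕ → Fin 4 → ℕ := fun k =>
  if k = 1 then ![0, 1, 2, 3]
  else if k = 2 then ![0, 1, α 1, α 2]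
  else match k % 4 with
    | 1 => ![0, α (k - 1), α k, α (k + 1)]
    | 2 => ![α (k - 3), 1, α (k - 1), α k]
    | 3 => ![α k, α (k + 1), 2, α (k - 1)]
    | _ => ![α (k - 1), α k, α (k - 3), 3]

/-- u = (u₁,u₂,u₃,u₄) solves equation (1) for f on S. -/
def Solves (S : Set (Fin 4 → ℕ)) (f : (Fin 4 → ℕ) → ℂ) (u : Fin 4 → ℕ → ℂ) : Prop :=
  ∀ p ∈ S, f p = ∑ i, u i (p i)

/-- S is good: every complex function on S decomposes into coordinate functions. -/
def IsGood (S : Set (Fin 4 → ℕ)) : Prop := ∀ f, ∃ u, Solves S f u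

/-- i-th projection of S. -/
def proj (S : Set (Fin 4 → ℕ)) (i : Fin 4) : Set ℕ := (fun p => p i) '' S

/-- B is a boundary set of S: for every f and every prescription U on B,
equation (1) admits a solution agreeing with U on B, unique on the projections of S. -/
def IsBoundary (S : Set (Fin 4 → ℕ)) (B : Set ℕ) : Prop :=
  B ⊆ ⋃ i, proj S i ∧
  ∀ f : (Fin 4 → ℕ) → ℂ, ∀ U : ℕ → ℂ,
    (∃ u, Solves S f u ∧ ∀ i, ∀ a ∈ B ∩ proj S i, u i a = U a) ∧
    ∀ u v, Solves S f u → (∀ i, ∀ a ∈ B ∩ proj S i, u i a = U a) →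
      Solves S f v → (∀ i, ∀ a ∈ B ∩ proj S i, v i a = U a) →
      ∀ i, ∀ a ∈ proj S i, u i a = v i a

/-- S is full: a maximal good subset of the product of its projections. -/
def IsFull (S : Set (Fin 4 → ℕ)) : Prop :=
  IsGood S ∧ ∀ T : Set (Fin 4 → ℕ), S ⊆ T → (∀ p ∈ T, ∀ i, p i ∈ proj S i) →
    IsGood T → T = S

/-- Sₙ = {y₁,…,y_N}. -/
def Sn (N : ℕ) : Set (Fin 4 → ℕ) := y '' Set.Icc 1 N

/-- The infinite set S = {y₁, y₂, …}. -/
def Sinf : Set (Fin 4 → ℕ) := y '' Set.Ici 1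

/-- The extra point z = zₙ = (α_{4n−1}, x₂, α_{4n−3}, x₄). -/
def z (n : ℕ) : Fin 4 → ℕ := ![α (4 * n - 1), 1, α (4 * n - 3), 3]

/-- Two points of S are related iff some finite full subset of S contains both. -/
def Related (S : Set (Fin 4 → ℕ)) (p q : Fin 4 → ℕ) : Prop :=
  ∃ K, K ⊆ S ∧ K.Finite ∧ IsFull K ∧ p ∈ K ∧ q ∈ K

/-- The 4n×4n incidence matrix A_{4n}: rows y₂,…,y_{4n},zₙ; columns α₁,…,α_{4n}. -/
def A (n : ℕ) : Matrix (Fin (4 * n)) (Fin (4 * n)) ℚ :=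
  Matrix.of fun i j =>
    if ∃ k, (if (i : ℕ) = 4 * n - 1 then z n else y ((i : ℕ) + 2)) k = (j : ℕ) + 4
    then 1 else 0

lemma y_one : y 1 = ![0, 1, 2, 3] := rfl

lemma y_two : y 2 = ![0, 1, α 1, α 2] := rfl

lemma y_four_mul_add_three (t : ℕ) :
    y (4 * t + 3) = ![α (4 * t + 3), α (4 * t + 4), 2, α (4 * t + 2)] := by
  simp only [y, show (4 * t + 3) % 4 = 3 by omega, if_neg (show 4 * t + 3 ≠ 1 by omega),
    if_neg (show 4 * t + 3 ≠ 2 by omega)]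
  rfl

lemma y_four_mul_add_four (t : ℕ) :
    y (4 * t + 4) = ![α (4 * t + 3), α (4 * t + 4), α (4 * t + 1), 3] := by
  simp only [y, show (4 * t + 4) % 4 = 0 by omega, if_neg (show 4 * t + 4 ≠ 1 by omega),
    if_neg (show 4 * t + 4 ≠ 2 by omega)]
  rfl

lemma y_four_mul_add_five (t : ℕ) :
    y (4 * t + 5) = ![0, α (4 * t + 4), α (4 * t + 5), α (4 * t + 6)] := by
  simp only [y, show (4 * t + 5) % 4 = 1 by omega, if_neg (show 4 * t + 5 ≠ 1 by omega),
    if_neg (show 4 * t + 5 ≠ 2 by omega)]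
  rfl

lemma y_four_mul_add_six (t : ℕ) :
    y (4 * t + 6) = ![α (4 * t + 3), 1, α (4 * t + 5), α (4 * t + 6)] := by
  simp only [y, show (4 * t + 6) % 4 = 2 by omega, if_neg (show 4 * t + 6 ≠ 1 by omega),
    if_neg (show 4 * t + 6 ≠ 2 by omega)]
  rfl

lemma y_mem_Sn {k N : ℕ} (hk : k ∈ Set.Icc 1 N) : y k ∈ Sn N := ⟨k, hk, rfl⟩

lemma y_apply_mem_proj_Sn {k N : ℕ} (hk : k ∈ Set.Icc 1 N) (i : Fin 4) :
    y k i ∈ proj (Sn N) i :=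
  ⟨y k, y_mem_Sn hk, rfl⟩

lemma Sn_mono {M N : ℕ} (h : M ≤ N) : Sn M ⊆ Sn N :=
  Set.image_mono (Set.Icc_subset_Icc_right h)

lemma proj_mono {S T : Set (Fin 4 → ℕ)} (h : S ⊆ T) (i : Fin 4) : proj S i ⊆ proj T i :=
  Set.image_mono h

lemma not_isBoundary_of_subset {S T : Set (Fin 4 → ℕ)} {B : Set ℕ} (hST : S ⊆ T)
    {f : (Fin 4 → ℕ) → ℂ} {U : ℕ → ℂ}
    (hf : ¬ ∃ u, Solves S f u ∧ ∀ i, ∀ a ∈ B ∩ proj S i, u i a = U a) :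
    ¬ IsBoundary T B := by
  intro hB
  obtain ⟨⟨u, hu, hU⟩, -⟩ := hB.2 f U
  exact hf ⟨u, fun p hp => hu p (hST hp),
    fun i a ha => hU i a ⟨ha.1, proj_mono hST i ha.2⟩⟩

lemma sum_fin_four_vecCons {β M : Type*} [AddCommMonoid M] (u : Fin 4 → β → M) (a b c d : β) :
    ∑ i, u i (![a, b, c, d] i) = u 0 a + u 1 b + u 2 c + u 3 d := by
  simp only [Fin.sum_univ_four]
  rfl

namespace Solves

variable {N : ℕ} {u : Fin 4 → ℕ → ℂ}

lemma sum_eq_of_y_eq (hu : Solves (Sn N) (Pi.single (y 1) 1) u) {k a b c d : ℕ}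
    (hk : k ∈ Set.Icc 1 N) (hy : y k = ![a, b, c, d]) (hne : ![a, b, c, d] ≠ y 1) :
    u 0 a + u 1 b + u 2 c + u 3 d = 0 := by
  have h := hu (y k) (y_mem_Sn hk)
  rwa [hy, Pi.single_eq_of_ne hne, sum_fin_four_vecCons, eq_comm] at h

lemma u_three_three (hu : Solves (Sn N) (Pi.single (y 1) 1) u) (hN : 1 ≤ N)
    (h0 : u 0 0 = 0) (h1 : u 1 1 = 0) (h2 : u 2 2 = 0) : u 3 3 = 1 := by
  have e1 := hu (y 1) (y_mem_Sn ⟨le_rfl, hN⟩)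
  rw [Pi.single_eq_same, y_one, sum_fin_four_vecCons] at e1
  linear_combination -e1 - h0 - h1 - h2

lemma u_three_eq_u_two_add_one (hu : Solves (Sn N) (Pi.single (y 1) 1) u) {t : ℕ}
    (ht : 4 * t + 4 ≤ N) (h2 : u 2 2 = 0) (h3 : u 3 3 = 1) :
    u 3 (α (4 * t + 2)) = u 2 (α (4 * t + 1)) + 1 := by
  have e3 := hu.sum_eq_of_y_eq ⟨by omega, by omega⟩ (y_four_mul_add_three t) (by simp [α, y_one])
  have e4 := hu.sum_eq_of_y_eq ⟨by omega, ht⟩ (y_four_mul_add_four t) (by simp [α, y_one])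
  linear_combination e3 - e4 - h2 + h3

lemma u_one_eq_neg_half_u_three (hu : Solves (Sn N) (Pi.single (y 1) 1) u) {t : ℕ}
    (ht : 4 * t + 6 ≤ N) (h0 : u 0 0 = 0) (h1 : u 1 1 = 0) (h2 : u 2 2 = 0) :
    u 1 (α (4 * t + 4)) = -u 3 (α (4 * t + 2)) / 2 := by
  have e3 := hu.sum_eq_of_y_eq ⟨by omega, by omega⟩ (y_four_mul_add_three t) (by simp [α, y_one])
  have e5 := hu.sum_eq_of_y_eq ⟨by omega, by omega⟩ (y_four_mul_add_five t) (by simp [α, y_one])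
  have e6 := hu.sum_eq_of_y_eq ⟨by omega, ht⟩ (y_four_mul_add_six t) (by simp [α, y_one])
  linear_combination (e3 + e5 - e6 - h0 + h1 - h2) / 2

lemma u_three_alpha_two (hu : Solves (Sn N) (Pi.single (y 1) 1) u) (hN : 4 ≤ N)
    (h0 : u 0 0 = 0) (h1 : u 1 1 = 0) (h2 : u 2 2 = 0) : u 3 (α 2) = 1 / 2 := by
  have e2 := hu.sum_eq_of_y_eq ⟨by omega, by omega⟩ y_two (by simp [α, y_one])
  have h := hu.u_three_eq_u_two_add_one (t := 0) hN h2 (hu.u_three_three (by omega) h0 h1 h2)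
  linear_combination (e2 - h0 - h1 + h) / 2

lemma u_three_alpha_succ (hu : Solves (Sn N) (Pi.single (y 1) 1) u) {t : ℕ}
    (ht : 4 * (t + 1) + 4 ≤ N) (h0 : u 0 0 = 0) (h1 : u 1 1 = 0) (h2 : u 2 2 = 0) :
    u 3 (α (4 * (t + 1) + 2)) = 1 / 2 + u 3 (α (4 * t + 2)) / 4 := by
  have e5 := hu.sum_eq_of_y_eq ⟨by omega, by omega⟩ (y_four_mul_add_five t) (by simp [α, y_one])
  have hv := hu.u_one_eq_neg_half_u_three (t := t) (by omega) h0 h1 h2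
  have hw := hu.u_three_eq_u_two_add_one ht h2 (hu.u_three_three (by omega) h0 h1 h2)
  rw [show 4 * (t + 1) + 1 = 4 * t + 5 by ring] at hw
  rw [show 4 * (t + 1) + 2 = 4 * t + 6 by ring] at hw ⊢
  linear_combination (e5 - h0 - hv + hw) / 2

lemma half_le_re_u_three (hu : Solves (Sn N) (Pi.single (y 1) 1) u)
    (h0 : u 0 0 = 0) (h1 : u 1 1 = 0) (h2 : u 2 2 = 0) :
    ∀ t, 4 * t + 4 ≤ N → 1 / 2 ≤ (u 3 (α (4 * t + 2))).re
  | 0, ht => by simp [hu.u_three_alpha_two ht h0 h1 h2]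
  | t + 1, ht => by
    have ih := half_le_re_u_three hu h0 h1 h2 t (by omega)
    rw [hu.u_three_alpha_succ ht h0 h1 h2]
    simp only [Complex.add_re, Complex.div_re]
    norm_num
    linarith

lemma u_three_ne_zero (hu : Solves (Sn N) (Pi.single (y 1) 1) u) {t : ℕ}
    (ht : 4 * t + 4 ≤ N) (h0 : u 0 0 = 0) (h1 : u 1 1 = 0) (h2 : u 2 2 = 0) :
    u 3 (α (4 * t + 2)) ≠ 0 := by
  intro h
  have := hu.half_le_re_u_three h0 h1 h2 t ht
  rw [h, Complex.zero_re] at this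
  norm_num at this

end Solves

lemma not_exists_solves_Sn_eq_zero_on (m : ℕ) :
    ¬ ∃ u, Solves (Sn (2 * m + 2)) (Pi.single (y 1) 1) u ∧
      ∀ i, ∀ a ∈ ({0, 1, 2, α (2 * m)} : Set ℕ) ∩ proj (Sn (2 * m + 2)) i, u i a = 0 := by
  rintro ⟨u, hu, hU⟩
  have hzero : ∀ {k a} (i : Fin 4), k ∈ Set.Icc 1 (2 * m + 2) → y k i = a →
      a ∈ ({0, 1, 2, α (2 * m)} : Set ℕ) → u i a = 0 := by
    rintro k a i hk rfl hB
    exact hU i _ ⟨hB, y_apply_mem_proj_Sn hk i⟩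
  have hy₁ : 1 ∈ Set.Icc 1 (2 * m + 2) := ⟨le_rfl, by omega⟩
  have h0 : u 0 0 = 0 := hzero 0 hy₁ rfl (by simp)
  have h1 : u 1 1 = 0 := hzero 1 hy₁ rfl (by simp)
  have h2 : u 2 2 = 0 := hzero 2 hy₁ rfl (by simp)
  obtain ⟨s, rfl | rfl⟩ := Nat.even_or_odd' m
  · rcases s with _ | t
    · have h3 : u 3 3 = 0 := hzero 3 hy₁ rfl (by simp [α])
      exact one_ne_zero ((hu.u_three_three (by omega) h0 h1 h2).symm.trans h3)
    · have hv : u 1 (α (4 * t + 4)) = 0 :=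
        hzero (k := 4 * t + 3) 1 ⟨by omega, by omega⟩ (by rw [y_four_mul_add_three]; rfl)
          (by rw [show 4 * t + 4 = 2 * (2 * (t + 1)) by ring]; simp)
      rw [hu.u_one_eq_neg_half_u_three (by omega) h0 h1 h2, div_eq_zero_iff, neg_eq_zero] at hv
      exact hu.u_three_ne_zero (t := t) (by omega) h0 h1 h2 (hv.resolve_right two_ne_zero)
  · have ha : u 3 (α (4 * s + 2)) = 0 :=
      hzero (k := 4 * s + 3) 3 ⟨by omega, by omega⟩ (by rw [y_four_mul_add_three]; rfl)
        (by rw [show 4 * s + 2 = 2 * (2 * s + 1) by ring]; simp)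
    exact hu.u_three_ne_zero (by omega) h0 h1 h2 ha

theorem stmt_7_general (m n : ℕ) (hmn : m < n) :
    (∃ (f : (Fin 4 → ℕ) → ℂ) (U : ℕ → ℂ),
      ¬ ∃ u, Solves (Sn (2 * m + 2)) f u ∧
        ∀ i, ∀ a ∈ ({0, 1, 2, α (2 * m)} : Set ℕ) ∩ proj (Sn (2 * m + 2)) i,
          u i a = U a) ∧
    ¬ IsBoundary (Sn (2 * n)) {0, 1, 2, α (2 * m)} := by
  have hno := not_exists_solves_Sn_eq_zero_on m
  exact ⟨⟨_, 0, hno⟩, not_isBoundary_of_subset (Sn_mono (by omega)) hno⟩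

/-- for 1 ≤ m < n, {x₁,x₂,x₃,α_{2m}} is NOT a boundary of S_{2n}:
there is an f on S_{2m+2} and a prescription U on the set for which equation (1)
has no solution extending U. -/
theorem stmt_7 (m n : ℕ) (hm : 1 ≤ m) (hmn : m < n) :
    (∃ (f : (Fin 4 → ℕ) → ℂ) (U : ℕ → ℂ),
      ¬ ∃ u, Solves (Sn (2 * m + 2)) f u ∧
        ∀ i, ∀ a ∈ ({0, 1, 2, α (2 * m)} : Set ℕ) ∩ proj (Sn (2 * m + 2)) i,
          u i a = U a) ∧
    ¬ IsBoundary (Sn (2 * n)) {0, 1, 2, α (2 * m)} :=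
  stmt_7_general m n hmn
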